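/- Suppose Γ ⊆ A* has the property that no element of Γ is a proper substring (factor) of any other element of Γ, and L is defined by L(x) = P_{ρ(x)} for x ∈ Γ, 0 otherwise. Then for x ∈ Γ, the context vector x̂ satisfies x̂(y,z) = 0 unless y = z = ε, and x̂(ε,ε) = P_{ρ(x)}; consequently for x, y ∈ Γ, x̂ ≤ ŷ (pointwise projection order) if and only if ρ(x) ⊢ ρ(y). -/
import Mathlib


/-- The projection `P_T` onto the span of basis vectors indexed by `T`. -/
noncomputable def proj {Λ : Type*} (T : Set Λ) : (Λ → ℝ) → (Λ → ℝ) :=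
  fun f => T.indicator f

/-- The context vector of a string `x`: `x̂(y,z) = L(y x z)`. -/
def ctxVec {A W : Type*} [Zero W] (L : FreeMonoid A → W) (x : FreeMonoid A) :
    (FreeMonoid A × FreeMonoid A) → W :=
  fun p => L (p.1 * x * p.2)

/-- The projection order: `P ≤ Q` iff `P∘Q = Q∘P = P`. -/
def projLE {Λ : Type*} (P Q : (Λ → ℝ) → (Λ → ℝ)) : Prop :=
  P ∘ Q = P ∧ Q ∘ P = P

lemma projLE_of_subset {Λ : Type*} {S T : Set Λ} (h : S ⊆ T) :
    projLE (proj S) (proj T) := by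
  constructor <;> funext f w <;>
    simp only [proj, Function.comp_apply, Set.indicator] <;>
    by_cases hS : w ∈ S
  · simp [hS, h hS]
  · simp [hS]
  · simp [hS, h hS]
  · by_cases hT : w ∈ T <;> simp [hS, hT]

/-- Suppose no element of `Γ` is a proper factor of another element of `Γ`, and
`L(x) = P_{ρ(x)}` for `x ∈ Γ`, `0` otherwise.  Then for `x ∈ Γ` the context
vector `x̂` vanishes on every context other than `(ε, ε)`, satisfies
`x̂(ε,ε) = P_{ρ(x)}`, and for `x, y ∈ Γ`, `x̂ ≤ ŷ` in the pointwise projection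
order iff `ρ(x) ⊢ ρ(y)`. -/
theorem context_vectors_encode_entailment
    {A Λ : Type*} (r : Λ → Λ → Prop)
    (hrefl : ∀ u, r u u) (htrans : ∀ u v w, r u v → r v w → r u w)
    (Γ : Set (FreeMonoid A)) (ρ : FreeMonoid A → Λ)
    (L : FreeMonoid A → ((Λ → ℝ) → (Λ → ℝ)))
    (hL : ∀ x ∈ Γ, L x = proj {w | r w (ρ x)})
    (hL0 : ∀ x ∉ Γ, L x = 0)
    (hfactor : ∀ x ∈ Γ, ∀ y z : FreeMonoid A, y * x * z ∈ Γ → y = 1 ∧ z = 1) :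
    (∀ x ∈ Γ, ∀ y z : FreeMonoid A, ¬(y = 1 ∧ z = 1) → ctxVec L x (y, z) = 0) ∧
    (∀ x ∈ Γ, ctxVec L x (1, 1) = proj {w | r w (ρ x)}) ∧
    (∀ x ∈ Γ, ∀ y ∈ Γ,
      (∀ c : FreeMonoid A × FreeMonoid A, projLE (ctxVec L x c) (ctxVec L y c))
        ↔ r (ρ x) (ρ y)) := by
  have key : ∀ x ∈ Γ, ∀ y z : FreeMonoid A, ¬(y = 1 ∧ z = 1) → ctxVec L x (y, z) = 0 := by
    intro x hx y z h
    have hm : y * x * z ∉ Γ := fun hm => h (hfactor x hx y z hm)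
    simp [ctxVec, hL0 _ hm]
  have key2 : ∀ x ∈ Γ, ctxVec L x (1, 1) = proj {w | r w (ρ x)} := by
    intro x hx
    simp [ctxVec, hL x hx]
  refine ⟨key, key2, ?_⟩
  intro x hx y hy
  constructor
  · intro h
    have h1 := (h (1, 1)).1
    rw [key2 x hx, key2 y hy] at h1
    have h2 := congrFun (congrFun h1 (fun _ => (1 : ℝ))) (ρ x)
    simp only [proj, Function.comp_apply, Set.indicator, Set.mem_setOf_eq,
      hrefl (ρ x), if_true] at h2
    by_contra hc
    simp [hc] at h2
  · intro hr c
    by_cases hc : c.1 = 1 ∧ c.2 = 1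
    · have hcx : ctxVec L x c = proj {w | r w (ρ x)} := by
        rw [← key2 x hx]; cases c; simp_all
      have hcy : ctxVec L y c = proj {w | r w (ρ y)} := by
        rw [← key2 y hy]; cases c; simp_all
      rw [hcx, hcy]
      exact projLE_of_subset (fun w hw => htrans w (ρ x) (ρ y) hw hr)
    · have hx0 : ctxVec L x c = 0 := by
        have := key x hx c.1 c.2 hc; simpa using this
      have hy0 : ctxVec L y c = 0 := by
        have := key y hy c.1 c.2 hc; simpa using this
      rw [hx0, hy0]
      constructor <;> funext f <;> simp [Pi.zero_apply]
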